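/- arXiv:2508.17561 — 3 statements merged into one kernel-verified Lean document; each statement's English description precedes it below -/
import Mathlib

section
/- Let C be a symmetric monoidal category with tensor unit I. Then C has uniform deleting (i.e., there exists a family of morphisms e_X : X → I, one for each object X, which is natural in X — meaning e_Y ∘ f = e_X for every morphism f : X → Y — and satisfies e_I = id_I) if and only if the tensor unit I is a terminal object of C. -/
open CategoryTheory CategoryTheory.Limits CategoryTheory.MonoidalCategory

/-- A symmetric monoidal category has *uniform deleting* iff its tensor unit is terminal. -/
theorem uniform_deleting_iff_unit_terminal
    {C : Type*} [Category C] [MonoidalCategory C] [SymmetricCategory C] :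
    (∃ e : ∀ X : C, X ⟶ 𝟙_ C,
        (∀ {X Y : C} (f : X ⟶ Y), f ≫ e Y = e X) ∧ e (𝟙_ C) = 𝟙 (𝟙_ C)) ↔
      Nonempty (IsTerminal (𝟙_ C)) := by
  constructor
  · rintro ⟨e, hnat, hI⟩
    exact ⟨IsTerminal.ofUniqueHom (fun X => e X) (fun X f => by
      have := hnat f
      rw [hI, Category.comp_id] at this
      exact this)⟩
  · rintro ⟨t⟩
    exact ⟨fun X => t.from X, fun {X Y} f => t.hom_ext _ _, t.hom_ext _ _⟩
end

section
/- Let E be an elementary topos (a category with all finite limits, which is cartesian closed, and which has a subobject classifier Ω with truth arrow true : 1 → Ω). Let (G, δ, ε) be a comonad on E whose underlying endofunctor G preserves finite limits (is left exact). Then the category of coalgebras for the comonad (G, δ, ε) is itself an elementary topos: it has all finite limits, is cartesian closed, and has a subobject classifier. -/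
open CategoryTheory CategoryTheory.Limits

universe v u

/-- A category has a subobject classifier: an object `Ω` with a truth arrow
`t : ⊤ ⟶ Ω` such that every monomorphism is the pullback of `t` along a
unique characteristic morphism. -/
def HasSubobjectClassifier (C : Type u) [Category.{v} C] [HasTerminal C] : Prop :=
  ∃ (Om : C) (t : ⊤_ C ⟶ Om), ∀ {S X : C} (m : S ⟶ X), Mono m →
    ∃! φ : X ⟶ Om, IsPullback (terminal.from S) m t φ

/-- An elementary topos: all finite limits, cartesian closed, and a
subobject classifier. -/
structure IsElementaryTopos (C : Type u) [Category.{v} C] : Prop where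
  hasFiniteLimits : HasFiniteLimits C
  cartesianClosed :
    letI := hasFiniteLimits
    letI := CategoryTheory.CartesianMonoidalCategory.ofHasFiniteProducts (C := C)
    Nonempty (MonoidalClosed C)
  subobjectClassifier :
    letI := hasFiniteLimits
    _root_.HasSubobjectClassifier C


/-!
Since `G` is left exact, the forgetful functor from coalgebras creates finite limits. It is
comonadic and commutes with binary products, so the adjoint lifting theorem turns the right
adjoint of `A.A ⊗ -` on `E` into a right adjoint of `A ⊗ -` on coalgebras.

For the classifier, let `γ : G Ω ⟶ Ω` classify the subobject `G true`. A subobject `S` of the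
carrier of a coalgebra `(X, a)` is a subcoalgebra iff `S = a⁻¹(G S)`, i.e. iff its characteristic
map `f` satisfies `a ≫ G f ≫ γ = f`. Such maps are represented by the equalizer of the identity
and the endomorphism of the cofree coalgebra on `Ω` adjoint to `γ`.
-/

open CategoryTheory.MonoidalCategory

namespace CategoryTheory

theorem IsPullback.eq_of_comp_eq_of_isTerminal {C : Type*} [Category C] {P T Y Z W : C}
    {u : P ⟶ T} {s : P ⟶ Y} {t : T ⟶ Z} {γ : Y ⟶ Z} (hP : IsTerminal P)
    (h : IsPullback u s t γ) {w₁ w₂ : W ⟶ Y} {a₁ a₂ : W ⟶ T}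
    (h₁ : w₁ ≫ γ = a₁ ≫ t) (h₂ : w₂ ≫ γ = a₂ ≫ t) : w₁ = w₂ := by
  rw [← h.lift_snd _ _ h₁.symm, ← h.lift_snd _ _ h₂.symm, hP.hom_ext (h.lift _ _ _)]

namespace Comonad

variable {E : Type u} [Category.{v} E] {G : Comonad E}

instance hasFiniteLimits_coalgebra [HasFiniteLimits E] [PreservesFiniteLimits (G : E ⥤ E)] :
    HasFiniteLimits G.Coalgebra :=
  ⟨fun _ _ _ => hasLimitsOfShape_of_hasLimitsOfShape_createsLimitsOfShape G.forget⟩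

section CartesianClosed

variable [CartesianMonoidalCategory E] [MonoidalClosed E]
  [CartesianMonoidalCategory G.Coalgebra] [HasCoreflexiveEqualizers G.Coalgebra]
  [PreservesLimitsOfShape (Discrete WalkingPair) G.forget]

instance Coalgebra.isLeftAdjoint_tensorLeft (A : G.Coalgebra) : (tensorLeft A).IsLeftAdjoint :=
  isLeftAdjoint_square_lift_comonadic (tensorLeft A) G.forget G.forget (tensorLeft A.A)
    (CartesianMonoidalCategory.prodComparisonNatIso G.forget A).symm

theorem Coalgebra.nonempty_monoidalClosed : Nonempty (MonoidalClosed G.Coalgebra) :=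
  ⟨{ closed A := { rightAdj := (tensorLeft A).rightAdjoint, adj := .ofIsLeftAdjoint _ } }⟩

end CartesianClosed

theorem Coalgebra.isPullback_a_of_mono {S X : G.Coalgebra} (m : S ⟶ X)
    [Mono (G.map m.f)] : IsPullback S.a m.f (G.map m.f) X.a := by
  have lift_m {T : E} {a : T ⟶ G.obj S.A} {b : T ⟶ X.A} (h : a ≫ G.map m.f = b ≫ X.a) :
      a ≫ G.ε.app S.A ≫ m.f = b := by
    have := G.ε.naturality m.f
    dsimp at this
    rw [← this, reassoc_of% h, X.counit, Category.comp_id]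
  refine IsPullback.mk' m.h (fun _ φ φ' h _ => ?_) (fun _ a b h => ⟨a ≫ G.ε.app S.A, ?_, ?_⟩)
  · simpa [Coalgebra.counit] using h =≫ G.ε.app S.A
  · rw [← cancel_mono (G.map m.f)]
    simp [m.h, reassoc_of% (lift_m h), h]
  · simpa using lift_m h

variable (G) in
/-- `G.cofree.obj Z` with a carrier that is reducibly `G.obj Z`: with `G.cofree.obj Z`, rewriting
fails on terms composing maps into it with `γ : G.obj Om ⟶ Om`. -/
abbrev cofreeCoalgebra (Z : E) : G.Coalgebra where
  A := G.obj Z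
  a := G.δ.app Z
  counit := G.left_counit Z
  coassoc := (G.coassoc Z).symm

@[simps]
def cofreeHomEquiv (X : G.Coalgebra) (Z : E) : (X.A ⟶ Z) ≃ (X ⟶ G.cofreeCoalgebra Z) where
  toFun f :=
    { f := X.a ≫ G.map f
      h := by simp [X.coassoc_assoc] }
  invFun ψ := ψ.f ≫ G.ε.app Z
  left_inv f := by simp [X.counit_assoc]
  right_inv ψ := by
    ext
    simp [reassoc_of% ψ.h]

theorem comp_cofreeHomEquiv {X Y : G.Coalgebra} {Z : E} (g : X ⟶ Y) (f : Y.A ⟶ Z) :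
    g ≫ cofreeHomEquiv Y Z f = cofreeHomEquiv X Z (g.f ≫ f) := by
  ext
  simp [reassoc_of% g.h]

section SubobjectClassifier

variable [HasFiniteLimits E] [PreservesFiniteLimits (G : E ⥤ E)]
  {Om : E} {t : ⊤_ E ⟶ Om} {γ : G.obj Om ⟶ Om}

theorem isPullback_a_comp_map_comp {S X : G.Coalgebra} (m : S ⟶ X) [Mono m.f] {f : X.A ⟶ Om}
    (hγ : IsPullback (terminal.from _) (G.map t) t γ)
    (hf : IsPullback (terminal.from S.A) m.f t f) :
    IsPullback (terminal.from S.A) m.f t (X.a ≫ G.map f ≫ γ) := by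
  have := (Coalgebra.isPullback_a_of_mono m).paste_horiz ((hf.map (G : E ⥤ E)).paste_horiz hγ)
  rwa [Subsingleton.elim (_ ≫ _) (terminal.from S.A)] at this

variable (γ) in
noncomputable abbrev classifierCoalgebra : G.Coalgebra :=
  equalizer (cofreeHomEquiv (G.cofreeCoalgebra Om) Om γ) (𝟙 _)

variable (γ) in
noncomputable def classifierProj : (classifierCoalgebra γ).A ⟶ Om :=
  (equalizer.ι _ _ : classifierCoalgebra γ ⟶ _).f ≫ G.ε.app Om

theorem equalizer_ι_f_comp_eq_classifierProj :
    (equalizer.ι _ _ : classifierCoalgebra γ ⟶ _).f ≫ γ = classifierProj γ := by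
  have := congrArg (cofreeHomEquiv _ Om).symm (equalizer.condition
    (cofreeHomEquiv (G.cofreeCoalgebra Om) Om γ) (𝟙 _))
  rwa [Category.comp_id, comp_cofreeHomEquiv, Equiv.symm_apply_apply] at this

variable (γ) in
noncomputable def homClassifierCoalgebraEquiv (X : G.Coalgebra) :
    (X ⟶ classifierCoalgebra γ) ≃ {f : X.A ⟶ Om // X.a ≫ G.map f ≫ γ = f} :=
  (Fork.IsLimit.homIso (equalizerIsEqualizer _ _) X).trans <|
    (cofreeHomEquiv X Om).symm.subtypeEquiv fun ψ => by
      have hψ := congrArg Coalgebra.Hom.f ((cofreeHomEquiv X Om).apply_symm_apply ψ)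
      rw [cofreeHomEquiv_apply_f] at hψ
      rw [reassoc_of% hψ, Category.comp_id, comp_cofreeHomEquiv]
      exact (Equiv.eq_symm_apply _).symm

@[simp]
theorem homClassifierCoalgebraEquiv_apply_coe {X : G.Coalgebra} (φ : X ⟶ classifierCoalgebra γ) :
    (homClassifierCoalgebraEquiv γ X φ : X.A ⟶ Om) = φ.f ≫ classifierProj γ :=
  Category.assoc _ _ _

noncomputable def classifierTruth (hw : terminal.from _ ≫ t = G.map t ≫ γ) :
    ⊤_ G.Coalgebra ⟶ classifierCoalgebra γ :=
  (homClassifierCoalgebraEquiv γ _).symm ⟨terminal.from _ ≫ t, by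
    rw [Functor.map_comp, Category.assoc, ← hw, ← Category.assoc, ← Category.assoc]
    congr 1
    exact terminal.hom_ext _ _⟩

variable (hγ : IsPullback (terminal.from _) (G.map t) t γ)

include hγ in
theorem isPullback_classifierTruth :
    IsPullback (terminal.from _) (classifierTruth hγ.w).f t (classifierProj γ) := by
  have hT : IsTerminal (⊤_ G.Coalgebra).A := isLimitOfHasTerminalOfPreservesLimit G.forget
  have hw : terminal.from _ ≫ t = (classifierTruth hγ.w).f ≫ classifierProj γ := by
    rw [← homClassifierCoalgebraEquiv_apply_coe, classifierTruth, Equiv.apply_symm_apply]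
  refine IsPullback.mk' hw (fun _ _ _ _ _ => hT.hom_ext _ _) fun W a b h => ⟨hT.from W,
    terminal.hom_ext _ _, ?_⟩
  have : Mono (equalizer.ι _ _ : classifierCoalgebra γ ⟶ _).f :=
    inferInstanceAs (Mono (G.forget.map _))
  rw [← cancel_mono (equalizer.ι _ _ : classifierCoalgebra γ ⟶ _).f]
  -- `γ⁻¹(true)` is `G ⊤`, which is terminal, so it has at most one generalized element.
  refine IsPullback.eq_of_comp_eq_of_isTerminal
    (isLimitOfHasTerminalOfPreservesLimit (G : E ⥤ E)) hγ (a₁ := hT.from W ≫ terminal.from _)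
    (by rw [Category.assoc, Category.assoc, equalizer_ι_f_comp_eq_classifierProj, ← hw,
      Category.assoc])
    (by rw [Category.assoc, equalizer_ι_f_comp_eq_classifierProj, h])

include hγ in
theorem isPullback_classifierTruth_iff {S X : G.Coalgebra} (m : S ⟶ X)
    (φ : X ⟶ classifierCoalgebra γ) :
    IsPullback (terminal.from S) m (classifierTruth hγ.w) φ ↔
      IsPullback (terminal.from S.A) m.f t (φ.f ≫ classifierProj γ) := by
  have hT := isPullback_classifierTruth hγ
  rw [← Subsingleton.elim ((terminal.from S).f ≫ terminal.from _) (terminal.from S.A)]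
  refine ⟨fun h => (h.map G.forget).paste_horiz hT, fun h => ?_⟩
  have hcomm : terminal.from S ≫ classifierTruth hγ.w = m ≫ φ := by
    apply (homClassifierCoalgebraEquiv γ S).injective
    ext
    simp only [homClassifierCoalgebraEquiv_apply_coe, Coalgebra.comp_f, Category.assoc, ← hT.w]
    simpa using h.w
  exact IsPullback.of_map G.forget hcomm (h.of_right (congrArg Coalgebra.Hom.f hcomm) hT)

theorem hasSubobjectClassifier_coalgebra (hE : _root_.HasSubobjectClassifier E) :
    _root_.HasSubobjectClassifier G.Coalgebra := by
  obtain ⟨Om, t, hcl⟩ := hE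
  have : Mono t := terminalIsTerminal.mono_from t
  obtain ⟨γ, hγ, -⟩ := hcl (G.map t) inferInstance
  refine ⟨classifierCoalgebra γ, classifierTruth hγ.w, fun {S X} m _ => ?_⟩
  have : Mono m.f := inferInstanceAs (Mono (G.forget.map m))
  obtain ⟨f, hf, hf_unique⟩ := hcl m.f inferInstance
  have hclosed : X.a ≫ G.map f ≫ γ = f := hf_unique _ (isPullback_a_comp_map_comp m hγ hf)
  let e := homClassifierCoalgebraEquiv γ X
  refine ⟨e.symm ⟨f, hclosed⟩, (isPullback_classifierTruth_iff hγ m _).2 ?_,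
    fun φ hφ => e.injective (Subtype.ext ?_)⟩
  · rwa [← homClassifierCoalgebraEquiv_apply_coe, Equiv.apply_symm_apply]
  · rw [homClassifierCoalgebraEquiv_apply_coe, Equiv.apply_symm_apply]
    exact hf_unique _ ((isPullback_classifierTruth_iff hγ m φ).1 hφ)

end SubobjectClassifier

end Comonad

end CategoryTheory

/-- If `(G, δ, ε)` is a comonad on an elementary topos `E` whose underlying
endofunctor is left exact (preserves finite limits), then the category of
coalgebras for the comonad is itself an elementary topos. -/
theorem isElementaryTopos_comonad_coalgebra
    {E : Type u} [Category.{v} E] (hE : IsElementaryTopos E)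
    (G : Comonad E) (hG : PreservesFiniteLimits (G : E ⥤ E)) :
    IsElementaryTopos (Comonad.Coalgebra G) := by
  have := hE.hasFiniteLimits
  let _ : CartesianMonoidalCategory E := .ofHasFiniteProducts
  let _ : MonoidalClosed E := hE.cartesianClosed.some
  let _ : CartesianMonoidalCategory G.Coalgebra := .ofHasFiniteProducts
  exact ⟨inferInstance, Comonad.Coalgebra.nonempty_monoidalClosed,
    Comonad.hasSubobjectClassifier_coalgebra hE.subobjectClassifier⟩
end

section
/- (Robbins–Siegmund supermartingale convergence, as stated in the paper.) Let (Ω, 𝓕, P) be a probability space with a filtration (𝓖_k)_{k≥0}, and let (y_k), (u_k), (a_k), (b_k) be sequences of nonnegative, integrable random variables adapted to (𝓖_k) such that almost surely, for every k ≥ 0, E[y_{k+1} | 𝓖_k] ≤ (1 + a_k) y_k − u_k + b_k, and almost surely Σ_{k=0}^∞ a_k < ∞ and Σ_{k=0}^∞ b_k < ∞. Then almost surely the sequence (y_k) converges to a (nonnegative, finite) random variable, and Σ_{k=0}^∞ u_k < ∞. -/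
open MeasureTheory Filter Finset
open scoped Topology

/-!
Discount by the predictable product `A k = ∏_{j<k} (1 + a j)`. Then
`z k = y k / A k + ∑_{j<k} (u j - b j) / A (j + 1)` is a supermartingale, bounded below by the
predictable nondecreasing process `-∑_{j<k} b j / A (j + 1)`. Stopping `z` just before this sum
exceeds `n` gives a supermartingale bounded below by `-n`, hence L¹-bounded and a.s. convergent;
where `∑ b < ∞`, one of these stopped processes is `z` itself. When `∑ a < ∞`, `A k` increases to a
finite limit, so convergence of `z` together with `y, u ≥ 0` yields convergence of `y` and
summability of `u`.
-/

/-- `x` frozen from the first index `m` with `s (m + 1) > c` on. If `s (k + 1)` is known at time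
`k`, this is `x` stopped at a stopping time, written as a martingale transform. -/
noncomputable def stoppedWhileLE (s x : ℕ → ℝ) (c : ℝ) (k : ℕ) : ℝ :=
  x 0 + ∑ i ∈ range k, (if s (i + 1) ≤ c then 1 else 0) * (x (i + 1) - x i)

section StoppedWhileLE

variable {s x : ℕ → ℝ} {c : ℝ}

lemma stoppedWhileLE_of_forall_le {k : ℕ} (h : ∀ i ≤ k, s i ≤ c) :
    stoppedWhileLE s x c k = x k := by
  rw [stoppedWhileLE, sum_congr rfl (g := fun i => x (i + 1) - x i) fun i hi => by
    rw [if_pos (h _ (mem_range.1 hi)), one_mul], sum_range_sub, add_sub_cancel]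

lemma exists_stoppedWhileLE_eq (hs : Monotone s) (h0 : s 0 ≤ c) (k : ℕ) :
    ∃ m, s m ≤ c ∧ stoppedWhileLE s x c k = x m := by
  induction k with
  | zero => exact ⟨0, h0, by simp [stoppedWhileLE]⟩
  | succ k ih =>
    by_cases hk : s (k + 1) ≤ c
    · exact ⟨k + 1, hk, stoppedWhileLE_of_forall_le fun i hi => (hs hi).trans hk⟩
    · obtain ⟨m, hm, heq⟩ := ih
      refine ⟨m, hm, ?_⟩
      rw [← heq, stoppedWhileLE, sum_range_succ, if_neg hk, zero_mul, add_zero, stoppedWhileLE]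

end StoppedWhileLE

lemma summable_and_exists_tendsto_of_tendsto_add_sum_sub {w v β : ℕ → ℝ} {c : ℝ}
    (hw : ∀ k, 0 ≤ w k) (hv : ∀ k, 0 ≤ v k) (hβ : Summable β)
    (h : Tendsto (fun k => w k + ∑ j ∈ range k, (v j - β j)) atTop (𝓝 c)) :
    Summable v ∧ ∃ l, Tendsto w atTop (𝓝 l) := by
  have hβ_lim := hβ.hasSum.tendsto_sum_nat
  obtain ⟨M, hM⟩ := (h.add hβ_lim).bddAbove_range
  have hv_sum : Summable v := summable_of_sum_range_le hv fun k => by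
    have hk := hM (Set.mem_range_self k)
    simp only [sum_sub_distrib] at hk
    linarith [hw k]
  refine ⟨hv_sum, _, ((h.add hβ_lim).sub hv_sum.hasSum.tendsto_sum_nat).congr fun k => ?_⟩
  rw [sum_sub_distrib]
  ring

namespace MeasureTheory

variable {Ω : Type*} {m : MeasurableSpace Ω} {μ : Measure Ω}

lemma Integrable.div_of_one_le {f g : Ω → ℝ} (hf : Integrable f μ)
    (hg : AEStronglyMeasurable g μ) (hg1 : ∀ ω, 1 ≤ g ω) :
    Integrable (fun ω => f ω / g ω) μ := by
  have hg_inv : ∀ ω, ‖(g ω)⁻¹‖ ≤ 1 := fun ω => by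
    rw [norm_inv, Real.norm_of_nonneg (zero_le_one.trans (hg1 ω))]
    exact inv_le_one_of_one_le₀ (hg1 ω)
  simpa only [div_eq_inv_mul, Pi.inv_apply] using
    hf.bdd_mul hg.aemeasurable.inv.aestronglyMeasurable (.of_forall hg_inv)

lemma condExp_mul_add_of_stronglyMeasurable {m' : MeasurableSpace Ω} (hm : m' ≤ m)
    [SigmaFinite (μ.trim hm)] {ξ X W : Ω → ℝ} (hξ : StronglyMeasurable[m'] ξ)
    (hW : StronglyMeasurable[m'] W) (hξX : Integrable (ξ * X) μ) (hX : Integrable X μ)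
    (hW_int : Integrable W μ) :
    μ[ξ * X + W | m'] =ᵐ[μ] ξ * μ[X | m'] + W := by
  filter_upwards [condExp_add hξX hW_int m', condExp_mul_of_stronglyMeasurable_left hξ hξX hX]
    with ω hadd hmul
  rw [hadd, Pi.add_apply, hmul, condExp_of_stronglyMeasurable hm hW hW_int, Pi.add_apply]

variable {𝓖 : Filtration ℕ m} [IsFiniteMeasure μ]

theorem Supermartingale.exists_ae_tendsto_of_bddBelow {f : ℕ → Ω → ℝ}
    (hf : Supermartingale f 𝓖 μ) {R : ℝ} (hR : ∀ n ω, R ≤ f n ω) :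
    ∀ᵐ ω ∂μ, ∃ c, Tendsto (fun n => f n ω) atTop (𝓝 c) := by
  set C := ∫ ω, f 0 ω ∂μ + 2 * |R| * μ.real Set.univ
  have hbdd : ∀ n, eLpNorm ((-f) n) 1 μ ≤ C.toNNReal := by
    intro n
    have hnorm : ∫ ω, ‖f n ω‖ ∂μ ≤ C :=
      calc ∫ ω, ‖f n ω‖ ∂μ ≤ ∫ ω, (f n ω + 2 * |R|) ∂μ := by
            refine integral_mono (hf.integrable n).norm
              ((hf.integrable n).add (integrable_const _)) fun ω => ?_
            have := hR n ω
            rw [Real.norm_eq_abs]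
            cases abs_cases (f n ω) <;> cases abs_cases R <;> linarith
        _ = ∫ ω, f n ω ∂μ + 2 * |R| * μ.real Set.univ := by
            rw [integral_add (hf.integrable n) (integrable_const _), integral_const, smul_eq_mul,
              mul_comm]
        _ ≤ C := by
            have := hf.setIntegral_le (Nat.zero_le n) MeasurableSet.univ
            rw [setIntegral_univ, setIntegral_univ] at this
            linarith
    rw [Pi.neg_apply, eLpNorm_neg, eLpNorm_one_eq_lintegral_enorm,
      ← ofReal_integral_norm_eq_lintegral_enorm (hf.integrable n)]
    exact ENNReal.ofReal_le_ofReal hnorm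
  filter_upwards [hf.neg.exists_ae_tendsto_of_bdd hbdd] with ω ⟨c, hc⟩
  exact ⟨-c, by simpa using hc.neg⟩

theorem supermartingale_stoppedWhileLE {f s : ℕ → Ω → ℝ} (hf : Supermartingale f 𝓖 μ)
    (hs : Adapted 𝓖 fun k => s (k + 1)) (c : ℝ) :
    Supermartingale (fun k ω => stoppedWhileLE (s · ω) (f · ω) c k) 𝓖 μ := by
  set χ : ℕ → Ω → ℝ := fun i ω => if s (i + 1) ω ≤ c then 1 else 0
  have hχ : StronglyAdapted 𝓖 χ := fun i =>
    (Measurable.ite (measurableSet_le (hs i) measurable_const) measurable_const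
      measurable_const).stronglyMeasurable
  have hχ01 : ∀ i ω, 0 ≤ χ i ω ∧ χ i ω ≤ 1 := fun i ω => by
    simp only [χ]
    split_ifs <;> norm_num
  have htransform := (hf.neg.sum_mul_sub hχ (fun i ω => (hχ01 i ω).2)
    fun i ω => (hχ01 i ω).1).neg
  have heq : (fun k ω => stoppedWhileLE (s · ω) (f · ω) c k) =
      (-fun k => ∑ i ∈ range k, χ i * ((-f) (i + 1) - (-f) i)) + fun _ => f 0 := by
    funext k ω
    simp only [stoppedWhileLE, Pi.add_apply, Pi.neg_apply, Finset.sum_apply,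
      Pi.mul_apply, Pi.sub_apply, χ, ← sum_neg_distrib, neg_sub_neg, ← mul_neg, neg_sub]
    exact add_comm _ _
  rw [heq]
  exact htransform.add_martingale
    (martingale_const_fun 𝓖 μ (hf.stronglyMeasurable 0) (hf.integrable 0))

theorem Supermartingale.ae_exists_tendsto_of_neg_sum_le {f d : ℕ → Ω → ℝ}
    (hf : Supermartingale f 𝓖 μ) (hd : Adapted 𝓖 d) (hd0 : ∀ k ω, 0 ≤ d k ω)
    (hfd : ∀ k ω, -∑ j ∈ range k, d j ω ≤ f k ω) :
    ∀ᵐ ω ∂μ, Summable (fun k => d k ω) → ∃ c, Tendsto (fun k => f k ω) atTop (𝓝 c) := by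
  set s : ℕ → Ω → ℝ := fun k ω => ∑ j ∈ range k, d j ω
  have hs_mono : ∀ ω, Monotone (s · ω) := fun ω =>
    monotone_nat_of_le_succ fun k => by simp [s, sum_range_succ, hd0]
  have hs_adp : Adapted 𝓖 fun k => s (k + 1) := fun k =>
    Finset.measurable_sum _ fun j hj =>
      (hd j).mono (𝓖.mono (Nat.lt_succ_iff.1 (mem_range.1 hj))) le_rfl
  have hconv : ∀ᵐ ω ∂μ, ∀ n : ℕ,
      ∃ c, Tendsto (fun k => stoppedWhileLE (s · ω) (f · ω) n k) atTop (𝓝 c) := by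
    refine ae_all_iff.2 fun n =>
      (supermartingale_stoppedWhileLE hf hs_adp n).exists_ae_tendsto_of_bddBelow (R := -n)
        fun k ω => ?_
    obtain ⟨m, hm, heq⟩ :=
      exists_stoppedWhileLE_eq (x := (f · ω)) (c := n) (hs_mono ω) (by simp [s]) k
    rw [heq]
    linarith [hfd m ω]
  filter_upwards [hconv] with ω hω hsum
  obtain ⟨n, hn⟩ := exists_nat_ge (∑' j, d j ω)
  obtain ⟨c, hc⟩ := hω n
  exact ⟨c, hc.congr fun k => stoppedWhileLE_of_forall_le fun i _ =>
    (hsum.sum_le_tsum _ fun j _ => hd0 j ω).trans hn⟩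

end MeasureTheory

namespace RobbinsSiegmund

variable {Ω : Type*} {m : MeasurableSpace Ω}

noncomputable def discount (a : ℕ → Ω → ℝ) (k : ℕ) (ω : Ω) : ℝ := ∏ j ∈ range k, (1 + a j ω)

noncomputable def discounted (y u a b : ℕ → Ω → ℝ) (k : ℕ) (ω : Ω) : ℝ :=
  y k ω / discount a k ω + ∑ j ∈ range k, (u j ω - b j ω) / discount a (j + 1) ω

section Discount

variable {a : ℕ → Ω → ℝ} {ω : Ω}

lemma discount_succ (k : ℕ) : discount a (k + 1) ω = discount a k ω * (1 + a k ω) :=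
  prod_range_succ _ _

lemma one_le_discount (ha : ∀ j, 0 ≤ a j ω) (k : ℕ) : 1 ≤ discount a k ω :=
  one_le_prod fun j _ => le_add_of_nonneg_right (ha j)

lemma discount_pos (ha : ∀ j, 0 ≤ a j ω) (k : ℕ) : 0 < discount a k ω :=
  zero_lt_one.trans_le (one_le_discount ha k)

lemma monotone_discount (ha : ∀ j, 0 ≤ a j ω) : Monotone (discount a · ω) :=
  monotone_nat_of_le_succ fun k => by
    rw [discount_succ]
    exact le_mul_of_one_le_right (discount_pos ha k).le (le_add_of_nonneg_right (ha k))

lemma exists_tendsto_discount (hsum : Summable (a · ω)) :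
    ∃ L, Tendsto (discount a · ω) atTop (𝓝 L) :=
  ⟨_, (Real.multipliable_one_add_of_summable hsum).hasProd.tendsto_prod_nat⟩

lemma measurable_discount {𝓖 : Filtration ℕ m} (ha : Adapted 𝓖 a) {k i : ℕ} (hki : k ≤ i + 1) :
    Measurable[𝓖 i] (discount a k) :=
  Finset.measurable_prod _ fun j hj =>
    measurable_const.add ((ha j).mono (𝓖.mono (by rw [mem_range] at hj; omega)) le_rfl)

lemma summable_div_discount {b : ℕ → Ω → ℝ} (ha : ∀ j, 0 ≤ a j ω) (hb : ∀ j, 0 ≤ b j ω)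
    (hsum : Summable (b · ω)) : Summable fun j => b j ω / discount a (j + 1) ω :=
  hsum.of_nonneg_of_le (fun j => div_nonneg (hb j) (discount_pos ha _).le)
    fun j => div_le_self (hb j) (one_le_discount ha _)

lemma measurable_sum_div_discount {𝓖 : Filtration ℕ m} {c : ℕ → Ω → ℝ} (hc : Adapted 𝓖 c)
    (ha : Adapted 𝓖 a) {k i : ℕ} (hki : k ≤ i + 1) :
    Measurable[𝓖 i] fun ω => ∑ j ∈ range k, c j ω / discount a (j + 1) ω :=
  Finset.measurable_sum _ fun j hj => by
    rw [mem_range] at hj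
    exact ((hc j).mono (𝓖.mono (by omega)) le_rfl).div (measurable_discount ha (by omega))

lemma integrable_div_discount {P : Measure Ω} {𝓖 : Filtration ℕ m} {f : Ω → ℝ}
    (hf : Integrable f P) (ha0 : ∀ j ω, 0 ≤ a j ω) (ha : Adapted 𝓖 a) (k : ℕ) :
    Integrable (fun ω => f ω / discount a k ω) P :=
  hf.div_of_one_le ((measurable_discount ha k.le_succ).mono (𝓖.le k) le_rfl).aestronglyMeasurable
    fun ω => one_le_discount (ha0 · ω) k

end Discount

variable {y u a b : ℕ → Ω → ℝ}

lemma discounted_eq_succ {ω : Ω} (ha0 : ∀ j, 0 ≤ a j ω) (k : ℕ) :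
    discounted y u a b k ω = ((1 + a k ω) * y k ω - u k ω + b k ω) / discount a (k + 1) ω +
      ∑ j ∈ range (k + 1), (u j ω - b j ω) / discount a (j + 1) ω := by
  have hA := (discount_pos ha0 k).ne'
  have ha : 1 + a k ω ≠ 0 := by linarith [ha0 k]
  simp only [discounted, sum_range_succ, discount_succ]
  field_simp
  ring

theorem supermartingale_discounted (P : Measure Ω) [IsFiniteMeasure P] (𝓖 : Filtration ℕ m)
    (ha0 : ∀ k ω, 0 ≤ a k ω) (hy_int : ∀ k, Integrable (y k) P)
    (hu_int : ∀ k, Integrable (u k) P) (hb_int : ∀ k, Integrable (b k) P)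
    (hy_adp : Adapted 𝓖 y) (hu_adp : Adapted 𝓖 u) (ha_adp : Adapted 𝓖 a) (hb_adp : Adapted 𝓖 b)
    (hrec : ∀ k, ∀ᵐ ω ∂P, (P[y (k + 1) | 𝓖 k]) ω ≤ (1 + a k ω) * y k ω - u k ω + b k ω) :
    Supermartingale (discounted y u a b) 𝓖 P := by
  set W : ℕ → Ω → ℝ := fun k ω => ∑ j ∈ range k, (u j ω - b j ω) / discount a (j + 1) ω
  have hW_meas : ∀ k i, k ≤ i + 1 → Measurable[𝓖 i] (W k) := fun _ _ =>
    measurable_sum_div_discount (hu_adp.sub hb_adp) ha_adp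
  have hW_int : ∀ k, Integrable (W k) P := fun k => integrable_finsetSum _ fun j _ =>
    integrable_div_discount ((hu_int j).sub (hb_int j)) ha0 ha_adp _
  have hyA_int : ∀ k, Integrable (fun ω => y k ω / discount a k ω) P := fun k =>
    integrable_div_discount (hy_int k) ha0 ha_adp k
  refine supermartingale_nat
    (fun k => (((hy_adp k).div (measurable_discount ha_adp k.le_succ)).add
      (hW_meas k k k.le_succ)).stronglyMeasurable)
    (fun k => (hyA_int k).add (hW_int k)) fun k => ?_
  have hcond : P[discounted y u a b (k + 1) | 𝓖 k] =ᵐ[P]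
      (discount a (k + 1))⁻¹ * P[y (k + 1) | 𝓖 k] + W (k + 1) := by
    have hsplit : discounted y u a b (k + 1) = (discount a (k + 1))⁻¹ * y (k + 1) + W (k + 1) := by
      funext ω
      simp only [discounted, Pi.add_apply, Pi.mul_apply, Pi.inv_apply, W, div_eq_inv_mul]
    rw [hsplit]
    exact condExp_mul_add_of_stronglyMeasurable (𝓖.le k)
      (measurable_discount ha_adp le_rfl).inv.stronglyMeasurable
      (hW_meas (k + 1) k le_rfl).stronglyMeasurable
      ((hyA_int (k + 1)).congr (.of_forall fun ω => div_eq_inv_mul _ _)) (hy_int (k + 1))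
      (hW_int (k + 1))
  filter_upwards [hcond, hrec k] with ω hcondω hrecω
  have hA_inv : 0 ≤ (discount a (k + 1) ω)⁻¹ := inv_nonneg.2 (discount_pos (ha0 · ω) _).le
  rw [hcondω, discounted_eq_succ (ha0 · ω) k, Pi.add_apply, Pi.mul_apply, Pi.inv_apply,
    div_eq_inv_mul]
  gcongr

lemma neg_sum_le_discounted (hy0 : ∀ k ω, 0 ≤ y k ω) (hu0 : ∀ k ω, 0 ≤ u k ω)
    (ha0 : ∀ k ω, 0 ≤ a k ω) (k : ℕ) (ω : Ω) :
    -∑ j ∈ range k, b j ω / discount a (j + 1) ω ≤ discounted y u a b k ω := by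
  have hyA : 0 ≤ y k ω / discount a k ω := div_nonneg (hy0 k ω) (discount_pos (ha0 · ω) k).le
  have huA : 0 ≤ ∑ j ∈ range k, u j ω / discount a (j + 1) ω :=
    sum_nonneg fun j _ => div_nonneg (hu0 j ω) (discount_pos (ha0 · ω) _).le
  simp only [discounted, sub_div, sum_sub_distrib]
  linarith

lemma exists_tendsto_and_summable_of_tendsto_discounted {ω : Ω} (hy0 : ∀ k, 0 ≤ y k ω)
    (hu0 : ∀ k, 0 ≤ u k ω) (ha0 : ∀ k, 0 ≤ a k ω) (hb0 : ∀ k, 0 ≤ b k ω)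
    (ha_sum : Summable (a · ω)) (hb_sum : Summable (b · ω))
    (hz : ∃ c, Tendsto (discounted y u a b · ω) atTop (𝓝 c)) :
    (∃ c : ℝ, 0 ≤ c ∧ Tendsto (fun k => y k ω) atTop (𝓝 c)) ∧ Summable fun k => u k ω := by
  obtain ⟨c, hc⟩ := hz
  obtain ⟨L, hL⟩ := exists_tendsto_discount ha_sum
  have hA_pos := discount_pos ha0
  have hA_le : ∀ k, discount a k ω ≤ L := (monotone_discount ha0).ge_of_tendsto hL
  obtain ⟨hv, l, hl⟩ := summable_and_exists_tendsto_of_tendsto_add_sum_sub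
    (w := fun k => y k ω / discount a k ω) (v := fun j => u j ω / discount a (j + 1) ω)
    (β := fun j => b j ω / discount a (j + 1) ω)
    (fun k => div_nonneg (hy0 k) (hA_pos k).le) (fun j => div_nonneg (hu0 j) (hA_pos _).le)
    (summable_div_discount ha0 hb0 hb_sum) (hc.congr fun k => by simp [discounted, sub_div])
  refine ⟨⟨l * L, mul_nonneg (ge_of_tendsto' hl fun k => div_nonneg (hy0 k) (hA_pos k).le)
    ((hA_pos 0).le.trans (hA_le 0)), (hl.mul hL).congr fun k => div_mul_cancel₀ _ (hA_pos k).ne'⟩,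
    (hv.mul_right L).of_nonneg_of_le hu0 fun j => ?_⟩
  calc u j ω = u j ω / discount a (j + 1) ω * discount a (j + 1) ω :=
        (div_mul_cancel₀ _ (hA_pos _).ne').symm
    _ ≤ u j ω / discount a (j + 1) ω * L :=
        mul_le_mul_of_nonneg_left (hA_le _) (div_nonneg (hu0 j) (hA_pos _).le)

end RobbinsSiegmund

open RobbinsSiegmund

theorem robbins_siegmund_general
    {Ω : Type*} {m : MeasurableSpace Ω} (P : Measure Ω) [IsProbabilityMeasure P]
    (𝓖 : Filtration ℕ m)
    (y u a b : ℕ → Ω → ℝ)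
    (hy_nonneg : ∀ k, ∀ ω, 0 ≤ y k ω) (hu_nonneg : ∀ k, ∀ ω, 0 ≤ u k ω)
    (ha_nonneg : ∀ k, ∀ ω, 0 ≤ a k ω) (hb_nonneg : ∀ k, ∀ ω, 0 ≤ b k ω)
    (hy_int : ∀ k, Integrable (y k) P) (hu_int : ∀ k, Integrable (u k) P)
    (hb_int : ∀ k, Integrable (b k) P)
    (hy_adp : Adapted 𝓖 y) (hu_adp : Adapted 𝓖 u)
    (ha_adp : Adapted 𝓖 a) (hb_adp : Adapted 𝓖 b)
    (hrec : ∀ k, ∀ᵐ ω ∂P,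
      (P[y (k + 1) | 𝓖 k]) ω ≤ (1 + a k ω) * y k ω - u k ω + b k ω)
    (ha_sum : ∀ᵐ ω ∂P, Summable fun k => a k ω)
    (hb_sum : ∀ᵐ ω ∂P, Summable fun k => b k ω) :
    ∀ᵐ ω ∂P,
      (∃ c : ℝ, 0 ≤ c ∧ Tendsto (fun k => y k ω) atTop (𝓝 c)) ∧
        Summable fun k => u k ω := by
  have hz := supermartingale_discounted P 𝓖 ha_nonneg hy_int hu_int hb_int hy_adp hu_adp ha_adp
    hb_adp hrec
  have hz_conv := hz.ae_exists_tendsto_of_neg_sum_le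
    (fun j => (hb_adp j).div (measurable_discount ha_adp le_rfl))
    (fun j ω => div_nonneg (hb_nonneg j ω) (discount_pos (ha_nonneg · ω) _).le)
    (neg_sum_le_discounted hy_nonneg hu_nonneg ha_nonneg)
  filter_upwards [hz_conv, ha_sum, hb_sum] with ω hω hsa hsb
  exact exists_tendsto_and_summable_of_tendsto_discounted (hy_nonneg · ω) (hu_nonneg · ω)
    (ha_nonneg · ω) (hb_nonneg · ω) hsa hsb
    (hω (summable_div_discount (ha_nonneg · ω) (hb_nonneg · ω) hsb))

/-- (Robbins–Siegmund supermartingale convergence.) If nonnegative integrable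
adapted sequences `y, u, a, b` satisfy
`E[y (k+1) | 𝓖 k] ≤ (1 + a k) * y k - u k + b k` almost surely for every `k`,
and `Σ a k < ∞` and `Σ b k < ∞` almost surely, then almost surely `y k`
converges to a nonnegative (finite) limit and `Σ u k < ∞`. -/
theorem robbins_siegmund
    {Ω : Type*} {m : MeasurableSpace Ω} (P : Measure Ω) [IsProbabilityMeasure P]
    (𝓖 : Filtration ℕ m)
    (y u a b : ℕ → Ω → ℝ)
    (hy_nonneg : ∀ k, ∀ ω, 0 ≤ y k ω) (hu_nonneg : ∀ k, ∀ ω, 0 ≤ u k ω)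
    (ha_nonneg : ∀ k, ∀ ω, 0 ≤ a k ω) (hb_nonneg : ∀ k, ∀ ω, 0 ≤ b k ω)
    (hy_int : ∀ k, Integrable (y k) P) (hu_int : ∀ k, Integrable (u k) P)
    (ha_int : ∀ k, Integrable (a k) P) (hb_int : ∀ k, Integrable (b k) P)
    (hy_adp : Adapted 𝓖 y) (hu_adp : Adapted 𝓖 u)
    (ha_adp : Adapted 𝓖 a) (hb_adp : Adapted 𝓖 b)
    (hrec : ∀ k, ∀ᵐ ω ∂P,
      (P[y (k + 1) | 𝓖 k]) ω ≤ (1 + a k ω) * y k ω - u k ω + b k ω)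
    (ha_sum : ∀ᵐ ω ∂P, Summable fun k => a k ω)
    (hb_sum : ∀ᵐ ω ∂P, Summable fun k => b k ω) :
    ∀ᵐ ω ∂P,
      (∃ c : ℝ, 0 ≤ c ∧ Tendsto (fun k => y k ω) atTop (𝓝 c)) ∧
        Summable fun k => u k ω :=
  robbins_siegmund_general P 𝓖 y u a b hy_nonneg hu_nonneg ha_nonneg hb_nonneg hy_int hu_int hb_int
    hy_adp hu_adp ha_adp hb_adp hrec ha_sum hb_sum
end
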